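/- One-dimensional moment comparison under Ehrhard symmetrization: for every z ∈ ℝ^{n−1}, ∫_{E_z} y dμ_z(y) ≥ ∫_{E^s_z} y dμ_z(y), where E^s_z = (−∞, φ_z⁻¹(μ_z(E_z))) is the half-line with the same μ_z-mass as E_z. -/

import Mathlib

open MeasureTheory Set
open scoped ENNReal Topology

noncomputable section

/-- The quadratic form `⟨Ax, x⟩`. -/
def qf {m : ℕ} (A : Matrix (Fin m) (Fin m) ℝ) (x : Fin m → ℝ) : ℝ :=
  ∑ i, (∑ j, A i j * x j) * x i

/-- The weight `y ↦ exp(−|√A(z,y)|²/2) = exp(−⟨A(z,y),(z,y)⟩/2)`, the density of the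
one-dimensional measure `μ_z` on the section over `z ∈ ℝⁿ`. -/
def dens {n : ℕ} (A : Matrix (Fin (n + 1)) (Fin (n + 1)) ℝ) (z : Fin n → ℝ) (y : ℝ) : ℝ :=
  Real.exp (- qf A (Fin.snoc z y) / 2)

/-- The one-dimensional section `E_z` of `E ⊆ ℝⁿ × ℝ`. -/
def sect {n : ℕ} (E : Set ((Fin n → ℝ) × ℝ)) (z : Fin n → ℝ) : Set ℝ :=
  {y | (z, y) ∈ E}

/-!
Write `φ y = ∫_{(-∞, y)} f` and `m = ∫_E f` for the positive integrable density `f` of `μ_z`.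
If `0 < m < ∫ f`, continuity and strict monotonicity of `φ` give `c` with `E^s = (-∞, c)` and
`φ c = m`. Then `E^s \ E` and `E \ E^s` carry the same `f`-mass, the first lies below `c` and
the second above it, so passing from `E^s` to `E` only moves mass upwards (bathtub principle).
In the degenerate cases `m = 0` and `m = ∫ f` the sets `E^s = ∅` resp. `E^s = ℝ` and `E` agree
up to a null set. Positive definiteness of `A` gives Gaussian decay of `f`, hence integrability
of `f` and of `y f(y)`.
-/

open Filter

theorem exists_pos_mul_sq_norm_le {E : Type*} [NormedAddCommGroup E] [NormedSpace ℝ E]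
    [ProperSpace E] [Nontrivial E] {q : E → ℝ} (hq : Continuous q)
    (hsmul : ∀ (c : ℝ) x, q (c • x) = c ^ 2 * q x) (hpos : ∀ x ≠ 0, 0 < q x) :
    ∃ l > 0, ∀ x, l * ‖x‖ ^ 2 ≤ q x := by
  obtain ⟨x₀, hx₀, hmin⟩ := (isCompact_sphere (0 : E) 1).exists_isMinOn
    (NormedSpace.sphere_nonempty.2 zero_le_one) hq.continuousOn
  refine ⟨q x₀, hpos x₀ (ne_zero_of_mem_unit_sphere ⟨x₀, hx₀⟩), fun x => ?_⟩
  rcases eq_or_ne x 0 with rfl | hx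
  · have hq0 : q 0 = 0 := by simpa using hsmul 0 0
    simp [hq0]
  have hx' : ‖x‖ ≠ 0 := norm_ne_zero_iff.2 hx
  calc q x₀ * ‖x‖ ^ 2 ≤ q (‖x‖⁻¹ • x) * ‖x‖ ^ 2 := by
        gcongr
        exact hmin (by simp [norm_smul, hx'])
    _ = q x := by rw [hsmul]; field_simp

namespace Matrix

variable {m : ℕ} (A : Matrix (Fin m) (Fin m) ℝ)

theorem continuous_qf : Continuous (qf A) := by
  unfold qf
  fun_prop

theorem qf_smul (c : ℝ) (x : Fin m → ℝ) : qf A (c • x) = c ^ 2 * qf A x := by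
  simp only [qf, Pi.smul_apply, smul_eq_mul, Finset.mul_sum, Finset.sum_mul]
  exact Finset.sum_congr rfl fun i _ => Finset.sum_congr rfl fun j _ => by ring

theorem PosDef.qf_pos {A : Matrix (Fin m) (Fin m) ℝ} (hA : A.PosDef) {x : Fin m → ℝ}
    (hx : x ≠ 0) : 0 < qf A x := by
  simpa [qf, dotProduct, mulVec, mul_comm] using hA.dotProduct_mulVec_pos hx

end Matrix

section Density

variable {n : ℕ} {A : Matrix (Fin (n + 1)) (Fin (n + 1)) ℝ}

theorem continuous_dens (z : Fin n → ℝ) : Continuous (dens A z) := by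
  unfold dens
  have hsnoc : Continuous fun y : ℝ => (Fin.snoc z y : Fin (n + 1) → ℝ) := by fun_prop
  exact Real.continuous_exp.comp ((A.continuous_qf.comp hsnoc).neg.div_const 2)

theorem dens_pos (z : Fin n → ℝ) (y : ℝ) : 0 < dens A z y :=
  Real.exp_pos _

theorem dens_le_exp_neg_mul_sq (hA : A.PosDef) (z : Fin n → ℝ) :
    ∃ b > 0, ∀ y, dens A z y ≤ Real.exp (-b * y ^ 2) := by
  obtain ⟨l, hl, hle⟩ := exists_pos_mul_sq_norm_le (A.continuous_qf) (A.qf_smul)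
    fun _ => hA.qf_pos
  refine ⟨l / 2, by positivity, fun y => Real.exp_le_exp.2 ?_⟩
  have hy : |y| ≤ ‖(Fin.snoc z y : Fin (n + 1) → ℝ)‖ := by
    simpa using norm_le_pi_norm (Fin.snoc z y : Fin (n + 1) → ℝ) (Fin.last n)
  have hy2 : y ^ 2 ≤ ‖(Fin.snoc z y : Fin (n + 1) → ℝ)‖ ^ 2 := by
    rw [← sq_abs]
    gcongr
  nlinarith [hle (Fin.snoc z y)]

theorem integrable_dens (hA : A.PosDef) (z : Fin n → ℝ) : Integrable (dens A z) := by
  obtain ⟨b, hb, hle⟩ := dens_le_exp_neg_mul_sq hA z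
  refine (integrable_exp_neg_mul_sq hb).mono' (continuous_dens z).aestronglyMeasurable
    (ae_of_all _ fun y => ?_)
  rw [Real.norm_of_nonneg (dens_pos z y).le]
  exact hle y

theorem integrable_mul_dens (hA : A.PosDef) (z : Fin n → ℝ) :
    Integrable fun y => y * dens A z y := by
  obtain ⟨b, hb, hle⟩ := dens_le_exp_neg_mul_sq hA z
  refine (integrable_mul_exp_neg_mul_sq hb).norm.mono'
    (continuous_id.mul (continuous_dens z)).aestronglyMeasurable (ae_of_all _ fun y => ?_)
  rw [norm_mul, norm_mul, Real.norm_of_nonneg (dens_pos z y).le,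
    Real.norm_of_nonneg (Real.exp_pos _).le]
  gcongr
  exact hle y

end Density

section SetIntegral

variable {α : Type*} [MeasurableSpace α] {μ : Measure α} {f g : α → ℝ} {s t : Set α}

theorem setIntegral_pos_iff_of_pos (hf_pos : ∀ x, 0 < f x) (hfs : IntegrableOn f s μ) :
    0 < ∫ x in s, f x ∂μ ↔ 0 < μ s := by
  rw [setIntegral_pos_iff_support_of_nonneg_ae (ae_of_all _ fun x => (hf_pos x).le) hfs,
    Function.support_eq_univ fun x => (hf_pos x).ne', univ_inter]

theorem ae_eq_of_subset_of_setIntegral_eq (hf_pos : ∀ x, 0 < f x) (hft : IntegrableOn f t μ)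
    (hs : MeasurableSet s) (hst : s ⊆ t)
    (h : ∫ x in s, f x ∂μ = ∫ x in t, f x ∂μ) : s =ᵐ[μ] t := by
  have hdiff : ∫ x in t \ s, f x ∂μ = 0 := by
    have := integral_inter_add_sdiff hs hft
    rw [inter_eq_right.2 hst] at this
    linarith
  have hnull : μ (t \ s) = 0 := by
    by_contra hne
    exact ((setIntegral_pos_iff_of_pos hf_pos (hft.mono_set sdiff_subset)).2
      (pos_iff_ne_zero.2 hne)).ne' hdiff
  exact ae_eq_set.2 ⟨by simp [sdiff_eq_empty.2 hst], hnull⟩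

theorem setIntegral_mul_le_of_setIntegral_eq (hf : Integrable f μ)
    (hgf : Integrable (fun x => g x * f x) μ) (hf_nonneg : ∀ x, 0 ≤ f x)
    (hs : MeasurableSet s) (ht : MeasurableSet t) {c : ℝ} (hsc : ∀ x ∈ s \ t, g x ≤ c)
    (htc : ∀ x ∈ t \ s, c ≤ g x) (h : ∫ x in s, f x ∂μ = ∫ x in t, f x ∂μ) :
    ∫ x in s, g x * f x ∂μ ≤ ∫ x in t, g x * f x ∂μ := by
  have hmass : ∫ x in s \ t, f x ∂μ = ∫ x in t \ s, f x ∂μ := by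
    have hs' := integral_inter_add_sdiff ht hf.integrableOn (s := s)
    have ht' := integral_inter_add_sdiff hs hf.integrableOn (s := t)
    rw [inter_comm] at ht'
    linarith
  have hlow : ∫ x in s \ t, g x * f x ∂μ ≤ ∫ x in s \ t, c * f x ∂μ :=
    setIntegral_mono_on hgf.integrableOn (hf.integrableOn.const_mul c) (hs.diff ht)
      fun x hx => mul_le_mul_of_nonneg_right (hsc x hx) (hf_nonneg x)
  have hhigh : ∫ x in t \ s, c * f x ∂μ ≤ ∫ x in t \ s, g x * f x ∂μ :=
    setIntegral_mono_on (hf.integrableOn.const_mul c) hgf.integrableOn (ht.diff hs)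
      fun x hx => mul_le_mul_of_nonneg_right (htc x hx) (hf_nonneg x)
  rw [integral_const_mul, hmass, ← integral_const_mul] at hlow
  have hs' := integral_inter_add_sdiff ht hgf.integrableOn (s := s)
  have ht' := integral_inter_add_sdiff hs hgf.integrableOn (s := t)
  rw [inter_comm] at ht'
  linarith

end SetIntegral

section Primitive

variable {μ : Measure ℝ} {f : ℝ → ℝ}

theorem continuous_setIntegral_Iio [NullSingletonClass μ] (hf : Integrable f μ) :
    Continuous fun y => ∫ t in Iio y, f t ∂μ :=
  continuous_iff_continuousAt.2 fun y =>
    (hf.integrableOn.continuousOn_Iic_primitive_Iio (a₀ := y + 1)).continuousAt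
      (Iic_mem_nhds (lt_add_one y))

theorem tendsto_setIntegral_Iio_atTop (hf : Integrable f μ) :
    Tendsto (fun y => ∫ t in Iio y, f t ∂μ) atTop (𝓝 (∫ t, f t ∂μ)) :=
  (aecover_Iio tendsto_id).integral_tendsto_of_countably_generated hf

theorem exists_setIntegral_Iio_eq [NullSingletonClass μ] (hf : Integrable f μ) {m : ℝ}
    (hm₀ : 0 < m) (hm : m < ∫ t, f t ∂μ) : ∃ c, ∫ t in Iio c, f t ∂μ = m := by
  have hbot := ((tendsto_integral_Iio_zero (μ := μ) (f := f) tendsto_id).eventually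
    (gt_mem_nhds hm₀)).exists
  have htop := ((tendsto_setIntegral_Iio_atTop hf).eventually (lt_mem_nhds hm)).exists
  exact mem_range_of_exists_le_of_exists_ge (continuous_setIntegral_Iio hf)
    (hbot.imp fun _ => le_of_lt) (htop.imp fun _ => le_of_lt)

theorem strictMono_setIntegral_Iio (hf : Integrable f) (hf_pos : ∀ y, 0 < f y) :
    StrictMono fun y => ∫ t in Iio y, f t := by
  intro a b hab
  rw [← sub_pos, intervalIntegral.integral_Iio_sub_Iio hf.integrableOn hab.le,
    setIntegral_pos_iff_of_pos hf_pos hf.integrableOn]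
  simpa using hab

end Primitive

/-- The Ehrhard symmetral `E^s = (-∞, φ⁻¹(∫_E f))` of `E`, where `φ y = ∫_{(-∞, y)} f`. -/
def ehrhardSymm (f : ℝ → ℝ) (E : Set ℝ) : Set ℝ :=
  {y | ∫ t in Iio y, f t < ∫ t in E, f t}

theorem setIntegral_ehrhardSymm_mul_le {f : ℝ → ℝ} (hf : Integrable f) (hf_pos : ∀ y, 0 < f y)
    (hyf : Integrable fun y => y * f y) {E : Set ℝ} (hE : MeasurableSet E) :
    ∫ y in ehrhardSymm f E, y * f y ≤ ∫ y in E, y * f y := by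
  have hφ := strictMono_setIntegral_Iio hf hf_pos
  have hf_nonneg : ∀ y, 0 ≤ f y := fun y => (hf_pos y).le
  rcases (setIntegral_nonneg hE fun y _ => hf_nonneg y).eq_or_lt with hzero | hpos
  · have hS : ehrhardSymm f E = ∅ := eq_empty_of_forall_notMem fun y (hy : _ < _) =>
      hy.not_ge (hzero ▸ setIntegral_nonneg measurableSet_Iio fun t _ => hf_nonneg t)
    rw [hS, setIntegral_congr_set (ae_eq_of_subset_of_setIntegral_eq hf_pos hf.integrableOn
      MeasurableSet.empty (empty_subset E) (by rw [← hzero, setIntegral_empty]))]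
  rcases (setIntegral_le_integral hf (ae_of_all _ hf_nonneg)).eq_or_lt with htotal | hlt
  · have hS : ehrhardSymm f E = univ := eq_univ_of_forall fun y =>
      (hφ (lt_add_one y)).trans_le (htotal ▸ hφ.monotone.ge_of_tendsto
        (tendsto_setIntegral_Iio_atTop hf) _)
    rw [hS, setIntegral_congr_set (ae_eq_of_subset_of_setIntegral_eq hf_pos hf.integrableOn
      hE (subset_univ E) (by rw [htotal, setIntegral_univ]))]
  obtain ⟨c, hc⟩ := exists_setIntegral_Iio_eq hf hpos hlt
  have hS : ehrhardSymm f E = Iio c := by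
    ext y
    rw [ehrhardSymm, mem_ofPred_eq, ← hc, hφ.lt_iff_lt, mem_Iio]
  rw [hS]
  exact setIntegral_mul_le_of_setIntegral_eq hf hyf hf_nonneg measurableSet_Iio hE
    (fun y hy => hy.1.le) (fun y hy => not_lt.1 hy.2) hc

theorem moment_comparison_general {n : ℕ} (A : Matrix (Fin (n + 1)) (Fin (n + 1)) ℝ)
    (hA : A.PosDef) (E : Set ((Fin n → ℝ) × ℝ)) (hE : MeasurableSet E)
    (z : Fin n → ℝ) :
    (∫ y in {y : ℝ | (∫ t in Set.Iio y, dens A z t) < ∫ t in sect E z, dens A z t},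
        y * dens A z y) ≤ ∫ y in sect E z, y * dens A z y :=
  setIntegral_ehrhardSymm_mul_le (integrable_dens hA z) (dens_pos z)
    (integrable_mul_dens hA z) (hE.preimage measurable_prodMk_left)

/-- One-dimensional moment comparison under Ehrhard symmetrization:
`∫_{E_z} y dμ_z(y) ≥ ∫_{E^s_z} y dμ_z(y)`, where
`E^s_z = (−∞, φ_z⁻¹(μ_z(E_z))) = {y : φ_z(y) < μ_z(E_z)}` is the half-line with the
same `μ_z`-mass as `E_z` (here `φ_z(y) = μ_z((−∞,y))`). -/
theorem moment_comparison {n : ℕ} (A : Matrix (Fin (n + 1)) (Fin (n + 1)) ℝ)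
    (hA : A.PosDef) (E : Set ((Fin n → ℝ) × ℝ)) (hE : MeasurableSet E)
    (z : Fin n → ℝ)
    (hInt : IntegrableOn (fun y : ℝ => |y| * dens A z y) (sect E z)) :
    (∫ y in {y : ℝ | (∫ t in Set.Iio y, dens A z t) < ∫ t in sect E z, dens A z t},
        y * dens A z y) ≤ ∫ y in sect E z, y * dens A z y :=
  moment_comparison_general A hA E hE z
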